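/- Let Δ < 0 be a discriminant with Δ ≠ −3, let (a,b,c) ∈ T_Δ and set τ = (b + √Δ)/(2a); assume τ lies in 𝔇⁺ (the right half of the standard fundamental domain) and let ζ₆ = (1+√−3)/2. Then |τ − ζ₆| ≥ √3/(4|Δ|). -/

import Mathlib

open Complex Polynomial

/-- The Eisenstein lattice sum `g₂(z) = 60 Σ' 1/(mz+n)⁴`. -/
noncomputable def g2 (z : ℂ) : ℂ :=
  60 * ∑' p : {p : ℤ × ℤ // p ≠ 0}, 1 / (((p : ℤ × ℤ).1 : ℂ) * z + ((p : ℤ × ℤ).2 : ℂ)) ^ 4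

/-- The Eisenstein lattice sum `g₃(z) = 140 Σ' 1/(mz+n)⁶`. -/
noncomputable def g3 (z : ℂ) : ℂ :=
  140 * ∑' p : {p : ℤ × ℤ // p ≠ 0}, 1 / (((p : ℤ × ℤ).1 : ℂ) * z + ((p : ℤ × ℤ).2 : ℂ)) ^ 6

/-- Klein's modular `j`-invariant, `j = 1728 g₂³ / (g₂³ - 27 g₃²)`. -/
noncomputable def jInv (z : ℂ) : ℂ :=
  1728 * g2 z ^ 3 / (g2 z ^ 3 - 27 * g3 z ^ 2)

/-- `τ` is an imaginary quadratic point of the upper half-plane. -/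
def IsImagQuad (τ : ℂ) : Prop :=
  0 < τ.im ∧ ∃ a b c : ℤ, a ≠ 0 ∧ (a : ℂ) * τ ^ 2 + (b : ℂ) * τ + (c : ℂ) = 0

/-- `Δ` is the discriminant of the CM order `End⟨τ,1⟩`: equivalently (and this is the standard
characterization), `Δ = b² - 4ac` where `aτ² + bτ + c = 0` with `a > 0`, `gcd(a,b,c) = 1`. -/
def IsDiscOf (Δ : ℤ) (τ : ℂ) : Prop :=
  ∃ a b c : ℤ, 0 < a ∧ Int.gcd a (Int.gcd b c) = 1 ∧
    (a : ℂ) * τ ^ 2 + (b : ℂ) * τ + (c : ℂ) = 0 ∧ Δ = b ^ 2 - 4 * a * c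

/-- The set `T_Δ` of reduced primitive integral triples of discriminant `Δ`. -/
def Tset (Δ : ℤ) : Set (ℤ × ℤ × ℤ) :=
  {t | Int.gcd t.1 (Int.gcd t.2.1 t.2.2) = 1 ∧ t.2.1 ^ 2 - 4 * t.1 * t.2.2 = Δ ∧
    ((-t.1 < t.2.1 ∧ t.2.1 ≤ t.1 ∧ t.1 < t.2.2) ∨ (0 ≤ t.2.1 ∧ t.2.1 ≤ t.1 ∧ t.1 = t.2.2))}

/-- The class number `h(Δ)`, i.e. the cardinality of `T_Δ`. -/
noncomputable def classNumber (Δ : ℤ) : ℕ := (Tset Δ).ncard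

/-- The point `τ(a,b,c) = (b + √Δ)/(2a)` (here `√Δ = i·√|Δ|` since `Δ < 0`). -/
noncomputable def tauOf (Δ a b : ℤ) : ℂ :=
  ((b : ℂ) + Complex.I * (Real.sqrt (-(Δ : ℝ)) : ℝ)) / (2 * (a : ℂ))

/-- The standard fundamental domain `𝔇`: the open hyperbolic triangle with vertices
`ζ₃`, `ζ₆`, `∞`, together with the geodesics joining `ζ₆` to `i` and to `∞`. -/
def fundDomain : Set ℂ :=
  {z | 0 < z.im ∧
    ((1 < ‖z‖ ∧ -(1 / 2) < z.re ∧ z.re < 1 / 2) ∨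
     (‖z‖ = 1 ∧ 0 ≤ z.re ∧ z.re ≤ 1 / 2) ∨
     (z.re = 1 / 2 ∧ 1 ≤ ‖z‖))}

/-- The right half `𝔇⁺ = {z ∈ 𝔇 : Re z ≥ 0}` of the fundamental domain. -/
def fundDomainPlus : Set ℂ := {z ∈ fundDomain | 0 ≤ z.re}

/-- `ζ₆ = (1 + √-3)/2`. -/
noncomputable def zeta6 : ℂ := (1 + Complex.I * (Real.sqrt 3 : ℝ)) / 2

/-!
In coordinates, `2a (τ - ζ₆) = (b - a) + i (√|Δ| - a√3)`, and reducedness gives `3a² ≤ |Δ|`.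
If `b ≠ a`, the real part alone has size at least `1/(2a)`. If `b = a`, then `a < c` (otherwise
`a = b = c = 1` and `Δ = -3`), so `|Δ| ≥ 3a² + 4a` and the imaginary part
`(|Δ| - 3a²) / (2a (√|Δ| + a√3))` is at least `1/√|Δ|`.
-/

namespace Tset

variable {Δ a b c : ℤ}

@[simp]
theorem mem_iff : (a, b, c) ∈ Tset Δ ↔ Int.gcd a (Int.gcd b c) = 1 ∧ b ^ 2 - 4 * a * c = Δ ∧
    ((-a < b ∧ b ≤ a ∧ a < c) ∨ (0 ≤ b ∧ b ≤ a ∧ a = c)) :=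
  Iff.rfl

theorem fst_pos (h : (a, b, c) ∈ Tset Δ) : 0 < a := by
  obtain ⟨hgcd, -, hred⟩ := mem_iff.1 h
  rcases hred with ⟨h1, h2, -⟩ | ⟨h1, h2, rfl⟩
  · omega
  · -- `a = 0` would force `(a, b, c) = 0`, whose gcd is `0`
    by_contra! ha
    obtain rfl : b = 0 := by omega
    obtain rfl : a = 0 := by omega
    simp at hgcd

theorem abs_snd_le_fst (h : (a, b, c) ∈ Tset Δ) : |b| ≤ a := by
  have ha := fst_pos h
  obtain ⟨-, -, hred⟩ := mem_iff.1 h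
  rw [abs_le]
  omega

theorem fst_le_thd (h : (a, b, c) ∈ Tset Δ) : a ≤ c := by
  obtain ⟨-, -, hred⟩ := mem_iff.1 h
  omega

theorem three_mul_sq_le_neg (h : (a, b, c) ∈ Tset Δ) : 3 * a ^ 2 ≤ -Δ := by
  have ha := fst_pos h
  have hb : b ^ 2 ≤ a ^ 2 := sq_le_sq.2 (by simpa [abs_of_pos ha] using abs_snd_le_fst h)
  have hac := fst_le_thd h
  rw [← (mem_iff.1 h).2.1]
  nlinarith

theorem disc_neg (h : (a, b, c) ∈ Tset Δ) : Δ < 0 := by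
  nlinarith [fst_pos h, three_mul_sq_le_neg h]

theorem fst_lt_thd_of_snd_eq_fst (h : (a, b, c) ∈ Tset Δ) (hΔ3 : Δ ≠ -3) (hba : b = a) :
    a < c := by
  obtain ⟨hgcd, hdisc, hred⟩ := mem_iff.1 h
  rcases hred with ⟨-, -, hac⟩ | ⟨-, -, rfl⟩
  · exact hac
  · subst hba
    have hb := fst_pos h
    obtain rfl : b = 1 := by
      rw [Int.gcd_self, Int.natCast_natAbs, abs_of_pos hb, Int.gcd_self] at hgcd
      omega
    norm_num at hdisc
    exact absurd hdisc.symm hΔ3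

theorem three_mul_sq_add_four_mul_le_neg (h : (a, b, c) ∈ Tset Δ) (hΔ3 : Δ ≠ -3)
    (hba : b = a) : 3 * a ^ 2 + 4 * a ≤ -Δ := by
  have hac := fst_lt_thd_of_snd_eq_fst h hΔ3 hba
  have ha := fst_pos h
  rw [← (mem_iff.1 h).2.1, hba]
  nlinarith

end Tset

theorem tauOf_re (Δ a b : ℤ) : (tauOf Δ a b).re = b / (2 * a) := by
  rw [tauOf, ← ofReal_intCast a, ← ofReal_ofNat, ← ofReal_mul, div_ofReal_re]
  simp

theorem tauOf_im (Δ a b : ℤ) : (tauOf Δ a b).im = √(-Δ) / (2 * a) := by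
  rw [tauOf, ← ofReal_intCast a, ← ofReal_ofNat, ← ofReal_mul, div_ofReal_im]
  simp

theorem zeta6_re : zeta6.re = 1 / 2 := by
  simp [zeta6]

theorem zeta6_im : zeta6.im = √3 / 2 := by
  simp [zeta6]

theorem tauOf_sub_zeta6_re (Δ : ℤ) {a : ℤ} (ha : a ≠ 0) (b : ℤ) :
    (tauOf Δ a b - zeta6).re = (b - a) / (2 * a) := by
  rw [sub_re, tauOf_re, zeta6_re]
  field_simp

theorem tauOf_sub_zeta6_im (Δ a b : ℤ) :
    (tauOf Δ a b - zeta6).im = √(-Δ) / (2 * a) - √3 / 2 := by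
  rw [sub_im, tauOf_im, zeta6_im]

theorem sqrt_three_div_le_div (a D k : ℝ) (ha : 1 ≤ a) (hD : 3 * a ^ 2 ≤ D) (hk : 1 ≤ k) :
    √3 / (4 * D) ≤ k / (2 * a) := by
  have ht : √3 ≤ 2 := Real.sqrt_le_iff.2 ⟨by norm_num, by norm_num⟩
  rw [div_le_div_iff₀ (by nlinarith) (by linarith)]
  nlinarith [Real.sqrt_nonneg 3]

theorem sqrt_three_div_le_sqrt_div_sub (a D : ℝ) (ha : 1 ≤ a) (hD : 3 * a ^ 2 + 4 * a ≤ D) :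
    √3 / (4 * D) ≤ √D / (2 * a) - √3 / 2 := by
  set s := √D
  set t := √3
  have hs2 : s ^ 2 = D := Real.sq_sqrt (by nlinarith)
  have ht2 : t ^ 2 = 3 := Real.sq_sqrt (by norm_num)
  have hD0 : 0 < D := by nlinarith
  have hs : 0 < s := Real.sqrt_pos.2 hD0
  have hta : t * a ≤ s := by nlinarith
  -- `(s - t a)(s + t a) = D - 3 a² ≥ 4 a` and `s + t a ≤ 2 s`
  have hgap : 2 * a ≤ (s - t * a) * s := by nlinarith
  calc t / (4 * D) ≤ 1 / s := by
        rw [div_le_div_iff₀ (by positivity) hs, ← hs2]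
        nlinarith
    _ ≤ (s - t * a) / (2 * a) := by
        rw [div_le_div_iff₀ hs (by positivity)]
        linarith
    _ = s / (2 * a) - t / 2 := by field_simp

theorem tau_far_from_zeta6_general (Δ : ℤ) (hΔ3 : Δ ≠ -3)
    (a b c : ℤ) (h : (a, b, c) ∈ Tset Δ) :
    Real.sqrt 3 / (4 * |(Δ : ℝ)|) ≤ ‖tauOf Δ a b - zeta6‖ := by
  have ha : (1 : ℝ) ≤ a := by exact_mod_cast Tset.fst_pos h
  rw [abs_of_neg (by exact_mod_cast Tset.disc_neg h)]
  obtain rfl | hba := eq_or_ne b a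
  · have hD : 3 * (b : ℝ) ^ 2 + 4 * b ≤ -Δ := by
      exact_mod_cast Tset.three_mul_sq_add_four_mul_le_neg h hΔ3 rfl
    calc √3 / (4 * -(Δ : ℝ)) ≤ (tauOf Δ b b - zeta6).im := by
          rw [tauOf_sub_zeta6_im]
          exact sqrt_three_div_le_sqrt_div_sub _ _ ha hD
      _ ≤ ‖tauOf Δ b b - zeta6‖ := (le_abs_self _).trans (abs_im_le_norm _)
  · have hD : 3 * (a : ℝ) ^ 2 ≤ -Δ := by exact_mod_cast Tset.three_mul_sq_le_neg h
    have hk : (1 : ℝ) ≤ |(b : ℝ) - a| := by exact_mod_cast Int.one_le_abs (sub_ne_zero.2 hba)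
    calc √3 / (4 * -(Δ : ℝ)) ≤ |(b : ℝ) - a| / (2 * a) := sqrt_three_div_le_div _ _ _ ha hD hk
      _ = |(tauOf Δ a b - zeta6).re| := by
          rw [tauOf_sub_zeta6_re Δ (Tset.fst_pos h).ne', abs_div, abs_of_pos (by linarith : (0 : ℝ) < 2 * a)]
      _ ≤ ‖tauOf Δ a b - zeta6‖ := abs_re_le_norm _

theorem tau_far_from_zeta6 (Δ : ℤ) (hΔ : Δ < 0) (hΔ3 : Δ ≠ -3)
    (a b c : ℤ) (h : (a, b, c) ∈ Tset Δ)
    (hplus : tauOf Δ a b ∈ fundDomainPlus) :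
    Real.sqrt 3 / (4 * |(Δ : ℝ)|) ≤ ‖tauOf Δ a b - zeta6‖ :=
  tau_far_from_zeta6_general Δ hΔ3 a b c h
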